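/- Let Σ be a finite alphabet, D0 and D1 probability distributions on Σ^n, K ≥ 1, and T a deterministic decision tree on inputs in (Σ^n)^K (possibly containing dummy vertices that make no query and have a single child) such that T never queries a sample that is settled, where sample j is settled at a vertex v if LR(v_j) := D1(v_j)/D0(v_j) ∉ [e^{−100}, e^{100}]. For x drawn from D1^K, let v^0 → v^1 → ⋯ be the computation path of T on x, and set Δ^t := OTLLR(v^{t+1}) − OTLLR(v^t). Then for every non-leaf vertex v at distance t from the root that is reached with positive probability under D1^K: E[Δ^t | v^t = v] ≥ 0.001 · E[(Δ^t)² | v^t = v] ≥ 0. -/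

import Mathlib

open Finset

/-- A deterministic decision tree over alphabet `α`, querying positions `ι`, with output
labels `β`; `dummy` vertices make no query and have a single child. -/
inductive DTreeD (α ι β : Type) : Type where
  | leaf : β → DTreeD α ι β
  | node : ι → (α → DTreeD α ι β) → DTreeD α ι β
  | dummy : DTreeD α ι β → DTreeD α ι β

/-- Probability mass of a set `S` under (the mass function of) a distribution `D`. -/
noncomputable def prS {γ : Type} [Fintype γ] (D : γ → ℝ) (S : Set γ) : ℝ :=
  ∑ x, S.indicator D x

/-- `D` is a probability mass function on the finite type `γ`. -/
def IsDist {γ : Type} [Fintype γ] (D : γ → ℝ) : Prop :=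
  (∀ x, 0 ≤ D x) ∧ ∑ x, D x = 1

/-- Likelihood ratio `LR(S) = D1(S)/D0(S)`. -/
noncomputable def LR {γ : Type} [Fintype γ] (D0 D1 : γ → ℝ) (S : Set γ) : ℝ :=
  prS D1 S / prS D0 S

/-- The `K`-fold product distribution `D^K` (input flattened). -/
noncomputable def prodD {α : Type} {n K : ℕ} (D : (Fin n → α) → ℝ) :
    ((Fin K × Fin n) → α) → ℝ :=
  fun x => ∏ j, D fun i => x (j, i)

/-- Sample `j` with current consistent set `S` is settled if `LR(S) ∉ [e^{−100}, e^{100}]`. -/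
def Settled {γ : Type} [Fintype γ] (D0 D1 : γ → ℝ) (S : Set γ) : Prop :=
  ¬ (Real.exp (-100) ≤ LR D0 D1 S ∧ LR D0 D1 S ≤ Real.exp 100)

/-- Truncated log likelihood ratio: `log LR(S)` if `|log LR(S)| ≤ 100` (i.e. `LR(S)` lies in
`[e^{−100}, e^{100}]`), and `500` otherwise. -/
noncomputable def tllr {γ : Type} [Fintype γ] (D0 D1 : γ → ℝ) (S : Set γ) : ℝ :=
  if Real.exp (-100) ≤ LR D0 D1 S ∧ LR D0 D1 S ≤ Real.exp 100 then
    Real.log (LR D0 D1 S)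
  else 500

/-- `OTLLR(v) = ∑_j TLLR(v_j)`. -/
noncomputable def otllr {α : Type} [Fintype α] {n K : ℕ} (D0 D1 : (Fin n → α) → ℝ)
    (Inp : Fin K → Set (Fin n → α)) : ℝ :=
  ∑ j, tllr D0 D1 (Inp j)

/-- `Input(v) = v_1 × ⋯ × v_K` viewed as a set of (flattened) inputs. -/
def InpSet {α : Type} {n K : ℕ} (Inp : Fin K → Set (Fin n → α)) :
    Set ((Fin K × Fin n) → α) :=
  {x | ∀ j, (fun i => x (j, i)) ∈ Inp j}

/-- Conditional expectation of `g` under `D` given the event `S`. -/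
noncomputable def cExp {γ : Type} [Fintype γ] (D : γ → ℝ) (S : Set γ) (g : γ → ℝ) : ℝ :=
  (∑ x, S.indicator (fun y => D y * g y) x) / prS D S

/-- `ReachV T u Inp t`: the vertex given by the subtree `u`, carrying the per-sample
consistent sets `Inp = (v_1, …, v_K)`, lies in `T` at distance `t` from the root. -/
inductive ReachV {α β : Type} {n K : ℕ} (T : DTreeD α (Fin K × Fin n) β) :
    DTreeD α (Fin K × Fin n) β → (Fin K → Set (Fin n → α)) → ℕ → Prop where
  | root : ReachV T T (fun _ => Set.univ) 0
  | step {p : Fin K × Fin n} {ch : α → DTreeD α (Fin K × Fin n) β}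
      {Inp : Fin K → Set (Fin n → α)} {t : ℕ} (a : α) :
      ReachV T (.node p ch) Inp t →
      ReachV T (ch a) (Function.update Inp p.1 (Inp p.1 ∩ {y | y p.2 = a})) (t + 1)
  | dummy {u : DTreeD α (Fin K × Fin n) β} {Inp : Fin K → Set (Fin n → α)} {t : ℕ} :
      ReachV T (.dummy u) Inp t → ReachV T u Inp (t + 1)

/-- The one-step increment `Δ^t(x) = OTLLR(v^{t+1}) − OTLLR(v^t)` at the vertex `(u, Inp)`,
as a function of the input `x` (it is `0` at dummy vertices, and at a query vertex it is the
change of `OTLLR` caused by the answer to the query read off from `x`). -/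
noncomputable def deltaStep {α β : Type} [Fintype α] {n K : ℕ} (D0 D1 : (Fin n → α) → ℝ)
    (u : DTreeD α (Fin K × Fin n) β) (Inp : Fin K → Set (Fin n → α))
    (x : (Fin K × Fin n) → α) : ℝ :=
  match u with
  | .node p _ =>
      otllr D0 D1 (Function.update Inp p.1 (Inp p.1 ∩ {y | y p.2 = x p})) - otllr D0 D1 Inp
  | _ => 0

/-!
At a query vertex only the queried sample `j` changes its TLLR. Given the vertex, the answer `a`,
which cuts `v_j` down to `v_j^a`, is distributed as under `D1` conditioned on `v_j`, i.e. with
probability `q_a = D1(v_j^a)/D1(v_j)`; put `p_a = D0(v_j^a)/D0(v_j)`. Both sum to `1`, so it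
suffices that `q_a - p_a ≤ q_a (g_a - 0.001 g_a²)` for the gain `g_a` of TLLR. If `v_j^a` is
unsettled then `p_a = q_a e^{-g_a}` with `g_a ≤ 200`, and `1 - e^{-s} ≤ s - 0.001 s²` for
`s ≤ 200`; if it is settled then `g_a ∈ [400, 600]`, where `g - 0.001 g² ≥ 1`. Off query
vertices the increment is `0`.
-/

section Sums

variable {γ α : Type} [Fintype γ] [Fintype α]

lemma prS_nonneg {D : γ → ℝ} (hD : ∀ x, 0 ≤ D x) (S : Set γ) : 0 ≤ prS D S :=
  Finset.sum_nonneg fun x _ => Set.indicator_nonneg (fun y _ => hD y) x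

lemma cExp_nonneg {D : γ → ℝ} (hD : ∀ x, 0 ≤ D x) (S : Set γ) {g : γ → ℝ}
    (hg : ∀ x, 0 ≤ g x) : 0 ≤ cExp D S g :=
  div_nonneg (Finset.sum_nonneg fun x _ =>
    Set.indicator_nonneg (fun y _ => mul_nonneg (hD y) (hg y)) x) (prS_nonneg hD S)

lemma sum_indicator_mul_comp (D : γ → ℝ) (S : Set γ) (f : γ → α) (G : α → ℝ) :
    ∑ x, S.indicator (fun y => D y * G (f y)) x = ∑ a, G a * prS D (S ∩ {y | f y = a}) := by
  classical
  simp only [prS, Finset.mul_sum]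
  rw [Finset.sum_comm]
  refine Finset.sum_congr rfl fun x _ => ?_
  by_cases hx : x ∈ S <;> simp [Set.indicator_apply, hx, mul_comm]

lemma cExp_comp_eq_sum (D : γ → ℝ) (S : Set γ) (f : γ → α) (G : α → ℝ) :
    cExp D S (fun y => G (f y)) = ∑ a, prS D (S ∩ {y | f y = a}) / prS D S * G a := by
  rw [cExp, sum_indicator_mul_comp, Finset.sum_div]
  exact Finset.sum_congr rfl fun a _ => by ring

lemma sum_prS_inter_fiber (D : γ → ℝ) (S : Set γ) (f : γ → α) :
    ∑ a, prS D (S ∩ {y | f y = a}) = prS D S := by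
  simpa [prS] using (sum_indicator_mul_comp D S f (fun _ => 1)).symm

end Sums

section Product

variable {α : Type} {n K : ℕ}

lemma indicator_InpSet_prodD (D : (Fin n → α) → ℝ) (Inp : Fin K → Set (Fin n → α))
    (x : (Fin K × Fin n) → α) :
    (InpSet Inp).indicator (prodD D) x = ∏ j, (Inp j).indicator D (fun i => x (j, i)) := by
  by_cases hx : x ∈ InpSet Inp
  · rw [Set.indicator_of_mem hx]
    exact Finset.prod_congr rfl fun j _ => (Set.indicator_of_mem (hx j) D).symm
  · obtain ⟨j, hj⟩ : ∃ j, (fun i => x (j, i)) ∉ Inp j := by simpa [InpSet] using hx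
    rw [Set.indicator_of_notMem hx,
      Finset.prod_eq_zero (Finset.mem_univ j) (Set.indicator_of_notMem hj D)]

lemma prodD_nonneg {D : (Fin n → α) → ℝ} (hD : ∀ y, 0 ≤ D y) (x : (Fin K × Fin n) → α) :
    0 ≤ prodD D x :=
  Finset.prod_nonneg fun _ _ => hD _

lemma prS_prodD_InpSet [Fintype α] (D : (Fin n → α) → ℝ) (Inp : Fin K → Set (Fin n → α)) :
    prS (prodD D) (InpSet Inp) = ∏ j, prS D (Inp j) := by
  classical
  simp only [prS]
  rw [Finset.prod_univ_sum, Fintype.piFinset_univ,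
    ← (Equiv.curry (Fin K) (Fin n) α).sum_comp]
  exact Finset.sum_congr rfl fun x _ => indicator_InpSet_prodD D Inp x

lemma prS_pos_of_prS_prodD_pos [Fintype α] {D : (Fin n → α) → ℝ} (hD : ∀ y, 0 ≤ D y)
    {Inp : Fin K → Set (Fin n → α)} (hpos : 0 < prS (prodD D) (InpSet Inp)) (j : Fin K) :
    0 < prS D (Inp j) := by
  refine (prS_nonneg hD _).lt_of_ne fun h => hpos.ne' ?_
  rw [prS_prodD_InpSet]
  exact Finset.prod_eq_zero (Finset.mem_univ j) h.symm

lemma InpSet_inter_eval_eq (Inp : Fin K → Set (Fin n → α)) (p : Fin K × Fin n) (a : α) :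
    InpSet Inp ∩ {x | x p = a} =
      InpSet (Function.update Inp p.1 (Inp p.1 ∩ {y | y p.2 = a})) := by
  ext x
  simp only [InpSet, Set.mem_inter_iff, Set.mem_ofPred_eq, Function.update_apply]
  constructor
  · rintro ⟨hx, rfl⟩ j
    split_ifs with hj
    · subst hj
      exact ⟨hx _, rfl⟩
    · exact hx j
  · intro hx
    have hp := hx p.1
    rw [if_pos rfl] at hp
    refine ⟨fun j => ?_, hp.2⟩
    by_cases hj : j = p.1
    · subst hj
      exact hp.1
    · simpa [hj] using hx j

lemma prS_prodD_update_mul [Fintype α] (D : (Fin n → α) → ℝ) (Inp : Fin K → Set (Fin n → α))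
    (k : Fin K) (S : Set (Fin n → α)) :
    prS (prodD D) (InpSet (Function.update Inp k S)) * prS D (Inp k) =
      prS D S * prS (prodD D) (InpSet Inp) := by
  classical
  have hupdate : ∀ S', ∏ j, prS D (Function.update Inp k S' j) =
      prS D S' * ∏ j ∈ Finset.univ \ {k}, prS D (Inp j) := fun S' => by
    simpa only [Function.apply_update (fun _ => prS D)] using
      Finset.prod_update_of_mem (Finset.mem_univ k) (fun j => prS D (Inp j)) (prS D S')
  have hself := hupdate (Inp k)
  rw [Function.update_eq_self] at hself
  rw [prS_prodD_InpSet, prS_prodD_InpSet, hupdate, hself]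
  ring

lemma cExp_prodD_comp_eval [Fintype α] {D : (Fin n → α) → ℝ} (hD : ∀ y, 0 ≤ D y)
    {Inp : Fin K → Set (Fin n → α)} (hpos : 0 < prS (prodD D) (InpSet Inp))
    (p : Fin K × Fin n) (G : α → ℝ) :
    cExp (prodD D) (InpSet Inp) (fun x => G (x p)) = cExp D (Inp p.1) (fun y => G (y p.2)) := by
  have hk := prS_pos_of_prS_prodD_pos hD hpos p.1
  rw [cExp_comp_eq_sum, cExp_comp_eq_sum]
  refine Finset.sum_congr rfl fun a _ => congrArg (· * G a) ?_
  rw [InpSet_inter_eval_eq, div_eq_div_iff hpos.ne' hk.ne', prS_prodD_update_mul]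

end Product

lemma one_sub_exp_neg_le {s : ℝ} (hs : s ≤ 200) : 1 - Real.exp (-s) ≤ s - 0.001 * s ^ 2 := by
  rcases le_or_gt s 2 with hs2 | hs2
  · have hsq : (1 - s / 2) ^ 2 ≤ Real.exp (-s) := by
      rw [show Real.exp (-s) = Real.exp (-(s / 2)) ^ 2 by rw [← Real.exp_nat_mul]; ring_nf]
      have h := Real.add_one_le_exp (-(s / 2))
      exact pow_le_pow_left₀ (by linarith) (by linarith) 2
    nlinarith
  · nlinarith [Real.exp_pos (-s)]

section LikelihoodRatio

variable {γ : Type} [Fintype γ] {D0 D1 : γ → ℝ}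

lemma LR_pos_of_not_settled {S : Set γ} (hS : ¬ Settled D0 D1 S) : 0 < LR D0 D1 S :=
  (Real.exp_pos _).trans_le (not_not.1 hS).1

lemma prS_pos_of_not_settled (hD1 : ∀ x, 0 ≤ D1 x) {S : Set γ}
    (hS : ¬ Settled D0 D1 S) : 0 < prS D1 S ∧ 0 < prS D0 S := by
  have h := LR_pos_of_not_settled hS
  rw [LR, div_pos_iff] at h
  exact h.resolve_right fun h' => (prS_nonneg hD1 S).not_gt h'.1

lemma tllr_of_not_settled {S : Set γ} (hS : ¬ Settled D0 D1 S) :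
    tllr D0 D1 S = Real.log (LR D0 D1 S) :=
  if_pos (not_not.1 hS)

lemma tllr_of_settled {S : Set γ} (hS : Settled D0 D1 S) : tllr D0 D1 S = 500 :=
  if_neg hS

lemma abs_tllr_le_of_not_settled {S : Set γ} (hS : ¬ Settled D0 D1 S) : |tllr D0 D1 S| ≤ 100 := by
  obtain ⟨hlo, hhi⟩ := not_not.1 hS
  have hpos := LR_pos_of_not_settled hS
  rw [tllr_of_not_settled hS, abs_le, Real.le_log_iff_exp_le hpos, Real.log_le_iff_le_exp hpos]
  exact ⟨hlo, hhi⟩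

variable {α : Type} [Fintype α]

lemma prS_div_sub_le_mul_tllr_sub (hD0 : ∀ x, 0 ≤ D0 x) (hD1 : ∀ x, 0 ≤ D1 x) {S : Set γ}
    (hS : ¬ Settled D0 D1 S) (S' : Set γ) :
    prS D1 S' / prS D1 S - prS D0 S' / prS D0 S ≤ prS D1 S' / prS D1 S *
      ((tllr D0 D1 S' - tllr D0 D1 S) - 0.001 * (tllr D0 D1 S' - tllr D0 D1 S) ^ 2) := by
  obtain ⟨h1, h0⟩ := prS_pos_of_not_settled hD1 hS
  have hq : 0 ≤ prS D1 S' / prS D1 S := div_nonneg (prS_nonneg hD1 S') h1.le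
  have hp : 0 ≤ prS D0 S' / prS D0 S := div_nonneg (prS_nonneg hD0 S') h0.le
  have hS100 := abs_le.1 (abs_tllr_le_of_not_settled hS)
  by_cases hS' : Settled D0 D1 S'
  · rw [tllr_of_settled hS']
    have hgain : 1 ≤ (500 - tllr D0 D1 S) - 0.001 * (500 - tllr D0 D1 S) ^ 2 := by nlinarith
    nlinarith
  · obtain ⟨h1', h0'⟩ := prS_pos_of_not_settled hD1 hS'
    have hS'100 := abs_le.1 (abs_tllr_le_of_not_settled hS')
    have hp_eq : prS D0 S' / prS D0 S =
        prS D1 S' / prS D1 S * Real.exp (-(tllr D0 D1 S' - tllr D0 D1 S)) := by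
      rw [tllr_of_not_settled hS, tllr_of_not_settled hS', neg_sub, Real.exp_sub,
        Real.exp_log (LR_pos_of_not_settled hS), Real.exp_log (LR_pos_of_not_settled hS'), LR, LR]
      field_simp
    rw [hp_eq, ← mul_one_sub]
    exact mul_le_mul_of_nonneg_left (one_sub_exp_neg_le (by linarith)) hq

noncomputable def tllrGain (D0 D1 : γ → ℝ) (S : Set γ) (f : γ → α) (a : α) : ℝ :=
  tllr D0 D1 (S ∩ {y | f y = a}) - tllr D0 D1 S

theorem mul_cExp_tllrGain_sq_le_cExp_tllrGain (hD0 : ∀ x, 0 ≤ D0 x) (hD1 : ∀ x, 0 ≤ D1 x)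
    {S : Set γ} (hS : ¬ Settled D0 D1 S) (f : γ → α) :
    0.001 * cExp D1 S (fun y => tllrGain D0 D1 S f (f y) ^ 2) ≤
      cExp D1 S (fun y => tllrGain D0 D1 S f (f y)) := by
  obtain ⟨h1, h0⟩ := prS_pos_of_not_settled hD1 hS
  have hsum := Finset.sum_le_sum fun a (_ : a ∈ Finset.univ) =>
    prS_div_sub_le_mul_tllr_sub hD0 hD1 hS (S ∩ {y | f y = a})
  rw [Finset.sum_sub_distrib, ← Finset.sum_div, ← Finset.sum_div, sum_prS_inter_fiber,
    sum_prS_inter_fiber, div_self h1.ne', div_self h0.ne', sub_self] at hsum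
  rw [cExp_comp_eq_sum D1 S f (fun a => tllrGain D0 D1 S f a ^ 2), cExp_comp_eq_sum,
    Finset.mul_sum]
  simpa only [tllrGain, mul_sub, Finset.sum_sub_distrib, sub_nonneg, mul_left_comm] using hsum

end LikelihoodRatio

section Tree

variable {α : Type} [Fintype α] {n K : ℕ}

lemma otllr_update_sub (D0 D1 : (Fin n → α) → ℝ) (Inp : Fin K → Set (Fin n → α)) (k : Fin K)
    (S : Set (Fin n → α)) :
    otllr D0 D1 (Function.update Inp k S) - otllr D0 D1 Inp =
      tllr D0 D1 S - tllr D0 D1 (Inp k) := by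
  classical
  have hupdate : ∀ S', ∑ j, tllr D0 D1 (Function.update Inp k S' j) =
      tllr D0 D1 S' + ∑ j ∈ Finset.univ \ {k}, tllr D0 D1 (Inp j) := fun S' => by
    simpa only [Function.apply_update (fun _ => tllr D0 D1)] using
      Finset.sum_update_of_mem (Finset.mem_univ k) (fun j => tllr D0 D1 (Inp j)) (tllr D0 D1 S')
  have hself := hupdate (Inp k)
  rw [Function.update_eq_self] at hself
  rw [otllr, otllr, hupdate, hself]
  ring

lemma deltaStep_node {β : Type} (D0 D1 : (Fin n → α) → ℝ) (p : Fin K × Fin n)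
    (ch : α → DTreeD α (Fin K × Fin n) β) (Inp : Fin K → Set (Fin n → α)) :
    deltaStep D0 D1 (.node p ch) Inp =
      fun x => tllrGain D0 D1 (Inp p.1) (fun y => y p.2) (x p) :=
  funext fun _ => otllr_update_sub D0 D1 Inp p.1 _

end Tree

theorem otllr_submartingale_general {α β : Type} [Fintype α] {n K : ℕ}
    (D0 D1 : (Fin n → α) → ℝ) (hD0 : IsDist D0) (hD1 : IsDist D1)
    (T : DTreeD α (Fin K × Fin n) β)
    (hsettled : ∀ (p : Fin K × Fin n) (ch : α → DTreeD α (Fin K × Fin n) β)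
      (Inp : Fin K → Set (Fin n → α)) (t : ℕ),
      ReachV T (.node p ch) Inp t → ¬ Settled D0 D1 (Inp p.1))
    (u : DTreeD α (Fin K × Fin n) β) (Inp : Fin K → Set (Fin n → α)) (t : ℕ)
    (hreach : ReachV T u Inp t)
    (hpos : 0 < prS (prodD D1) (InpSet Inp)) :
    (0.001 : ℝ) * cExp (prodD D1) (InpSet Inp) (fun x => (deltaStep D0 D1 u Inp x) ^ 2) ≤
      cExp (prodD D1) (InpSet Inp) (deltaStep D0 D1 u Inp) ∧
    0 ≤ (0.001 : ℝ) * cExp (prodD D1) (InpSet Inp) (fun x => (deltaStep D0 D1 u Inp x) ^ 2) := by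
  refine ⟨?_, mul_nonneg (by norm_num) (cExp_nonneg (prodD_nonneg hD1.1) _ fun _ => sq_nonneg _)⟩
  cases u with
  | node p ch =>
    rw [deltaStep_node, cExp_prodD_comp_eval hD1.1 hpos, cExp_prodD_comp_eval hD1.1 hpos p
      (fun a => tllrGain D0 D1 (Inp p.1) (fun y => y p.2) a ^ 2)]
    exact mul_cExp_tllrGain_sq_le_cExp_tllrGain hD0.1 hD1.1 (hsettled p ch Inp t hreach) _
  | leaf _ | dummy _ => simp [deltaStep, cExp]

/-- (Sub-martingale property of the progress measure.)  If `T` never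
queries a settled sample, then for every non-leaf vertex `v = (u, Inp)` at distance `t`
from the root that is reached with positive probability under `D1^K`:
`E[Δ^t | v^t = v] ≥ 0.001 · E[(Δ^t)² | v^t = v] ≥ 0`. -/
theorem otllr_submartingale {α β : Type} [Fintype α] {n K : ℕ}
    (D0 D1 : (Fin n → α) → ℝ) (hD0 : IsDist D0) (hD1 : IsDist D1)
    (T : DTreeD α (Fin K × Fin n) β)
    (hsettled : ∀ (p : Fin K × Fin n) (ch : α → DTreeD α (Fin K × Fin n) β)
      (Inp : Fin K → Set (Fin n → α)) (t : ℕ),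
      ReachV T (.node p ch) Inp t → ¬ Settled D0 D1 (Inp p.1))
    (u : DTreeD α (Fin K × Fin n) β) (Inp : Fin K → Set (Fin n → α)) (t : ℕ)
    (hreach : ReachV T u Inp t) (hnonleaf : ∀ b, u ≠ .leaf b)
    (hpos : 0 < prS (prodD D1) (InpSet Inp)) :
    (0.001 : ℝ) * cExp (prodD D1) (InpSet Inp) (fun x => (deltaStep D0 D1 u Inp x) ^ 2) ≤
      cExp (prodD D1) (InpSet Inp) (deltaStep D0 D1 u Inp) ∧
    0 ≤ (0.001 : ℝ) * cExp (prodD D1) (InpSet Inp) (fun x => (deltaStep D0 D1 u Inp x) ^ 2) :=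
  otllr_submartingale_general D0 D1 hD0 hD1 T hsettled u Inp t hreach hpos
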